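/- arXiv:1012.5102 — 2 statements merged into one kernel-verified Lean document; each statement's English description precedes it below -/
import Mathlib

section
/- Let n ≥ 1, let H : ℝⁿ → ℝ be continuously differentiable, let a, b ∈ ℝⁿ, and suppose H is constant on the closed segment [a,b] = { ta + (1−t)b : 0 ≤ t ≤ 1 }. Let f : ℝ → ℝ be differentiable with sup_{t ∈ ℝ} |f'(t)| < 1, and define u : ℝⁿ → ℝ by u(x) = ((b+a)/2)·x + f(((b−a)/2)·x). Then for every x ∈ ℝⁿ one has (b−a)·∇H(∇u(x)) = 0, i.e. the gradient of H restricted to the range of ∇u is normal to the segment direction b − a. -/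
/-!
Since `|f'| < 1`, the gradient `∇u(x) = (b + a)/2 + f'(s) (b - a)/2`, with `s = (b - a)/2 · x`,
lies in the open segment `(a, b)`. As `H` is constant on `[a, b]`, its derivative at an interior point of the segment
vanishes in the direction `b - a`, i.e. `∇H(∇u(x))` is orthogonal to `b - a`.
-/

open scoped RealInnerProductSpace

theorem fderiv_sub_eq_zero_of_eqOn_segment {E F : Type*} [NormedAddCommGroup E] [NormedSpace ℝ E]
    [NormedAddCommGroup F] [NormedSpace ℝ F] {H : E → F} {a b x : E} {c : F}
    (hconst : ∀ y ∈ segment ℝ a b, H y = c) (hx : x ∈ openSegment ℝ a b)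
    (hH : DifferentiableAt ℝ H x) : fderiv ℝ H x (b - a) = 0 := by
  rw [openSegment_eq_image_lineMap] at hx
  obtain ⟨t, ht, rfl⟩ := hx
  have hline : HasDerivAt (fun s : ℝ => H (AffineMap.lineMap a b s))
      (fderiv ℝ H (AffineMap.lineMap a b t) (b - a)) t :=
    hH.hasFDerivAt.comp_hasDerivAt t AffineMap.hasDerivAt_lineMap
  have hloc : (fun s : ℝ => H (AffineMap.lineMap a b s)) =ᶠ[nhds t] fun _ => c := by
    filter_upwards [Icc_mem_nhds ht.1 ht.2] with s hs
    exact hconst _ (segment_eq_image_lineMap ℝ a b ▸ ⟨s, hs, rfl⟩)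
  exact hline.unique ((hasDerivAt_const t c).congr_of_eventuallyEq hloc)

theorem hasGradientAt_inner_add_comp_inner {E : Type*} [NormedAddCommGroup E]
    [InnerProductSpace ℝ E] [CompleteSpace E] {f : ℝ → ℝ} {f' : ℝ} {v w x : E}
    (hf : HasDerivAt f f' ⟪w, x⟫) :
    HasGradientAt (fun y => ⟪v, y⟫ + f ⟪w, y⟫) (v + f' • w) x := by
  rw [hasGradientAt_iff_hasFDerivAt]
  refine ((innerSL ℝ v).hasFDerivAt.add
    (hf.hasFDerivAt.comp x (innerSL ℝ w).hasFDerivAt)).congr_fderiv ?_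
  ext y
  simp [mul_comm]

theorem add_smul_inv_two_smul_sub_mem_openSegment {E : Type*} [AddCommGroup E] [Module ℝ E]
    (a b : E) {m : ℝ} (hm : |m| < 1) :
    (2:ℝ)⁻¹ • (b + a) + m • (2:ℝ)⁻¹ • (b - a) ∈ openSegment ℝ a b := by
  obtain ⟨hm₁, hm₂⟩ := abs_lt.mp hm
  refine ⟨(1 - m) / 2, (1 + m) / 2, by linarith, by linarith, by ring, ?_⟩
  module

theorem stmt_3_general (n : ℕ) (H : EuclideanSpace ℝ (Fin n) → ℝ)
    (hH : ContDiff ℝ 1 H) (a b : EuclideanSpace ℝ (Fin n)) (c : ℝ)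
    (hconst : ∀ t : ℝ, t ∈ Set.Icc (0:ℝ) 1 → H (t • a + (1 - t) • b) = c)
    (f : ℝ → ℝ) (hf : Differentiable ℝ f)
    (M : ℝ) (hM : M < 1) (hf' : ∀ t : ℝ, |deriv f t| ≤ M)
    (u : EuclideanSpace ℝ (Fin n) → ℝ)
    (hu : ∀ x, u x = ⟪(2:ℝ)⁻¹ • (b + a), x⟫ + f ⟪(2:ℝ)⁻¹ • (b - a), x⟫) :
    ∀ x, ⟪b - a, gradient H (gradient u x)⟫ = 0 := by
  intro x
  have hsegment : ∀ y ∈ segment ℝ a b, H y = c := by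
    rw [segment_symm, segment_eq_image]
    rintro _ ⟨t, ht, rfl⟩
    simpa [add_comm] using hconst t ht
  have hgrad : gradient u x =
      (2:ℝ)⁻¹ • (b + a) + deriv f ⟪(2:ℝ)⁻¹ • (b - a), x⟫ • (2:ℝ)⁻¹ • (b - a) := by
    rw [funext hu]
    exact (hasGradientAt_inner_add_comp_inner (hf _).hasDerivAt).gradient
  have hmem := add_smul_inv_two_smul_sub_mem_openSegment a b
    ((hf' ⟪(2:ℝ)⁻¹ • (b - a), x⟫).trans_lt hM)
  rw [inner_gradient_right, hgrad, fderiv_sub_eq_zero_of_eqOn_segment hsegment hmem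
    (hH.differentiable one_ne_zero _), map_zero]

theorem stmt_3 (n : ℕ) (hn : 1 ≤ n) (H : EuclideanSpace ℝ (Fin n) → ℝ)
    (hH : ContDiff ℝ 1 H) (a b : EuclideanSpace ℝ (Fin n)) (c : ℝ)
    (hconst : ∀ t : ℝ, t ∈ Set.Icc (0:ℝ) 1 → H (t • a + (1 - t) • b) = c)
    (f : ℝ → ℝ) (hf : Differentiable ℝ f)
    (M : ℝ) (hM : M < 1) (hf' : ∀ t : ℝ, |deriv f t| ≤ M)
    (u : EuclideanSpace ℝ (Fin n) → ℝ)
    (hu : ∀ x, u x = ⟪(2:ℝ)⁻¹ • (b + a), x⟫ + f ⟪(2:ℝ)⁻¹ • (b - a), x⟫) :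
    ∀ x, ⟪b - a, gradient H (gradient u x)⟫ = 0 :=
  stmt_3_general n H hH a b c hconst f hf M hM hf' u hu
end

section
/- (Lemma 2) Let n ≥ 2, let H : ℝⁿ → ℝ be continuously differentiable, let a, b ∈ ℝⁿ, and suppose H is constant on the closed segment [a,b] = { ta + (1−t)b : 0 ≤ t ≤ 1 }. Let f : ℝ → ℝ be twice continuously differentiable with sup_{t ∈ ℝ} |f'(t)| < 1, and define u : ℝⁿ → ℝ by u(x) = ((b+a)/2)·x + f(((b−a)/2)·x). Then u is a classical (C²) entire solution of the Aronsson equation: for every x ∈ ℝⁿ, D²u(x)(∇H(∇u(x)), ∇H(∇u(x))) = 0. -/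
/-!
Write `v = (b + a) / 2` and `w = (b - a) / 2`, so `u y = ⟪v, y⟫ + f ⟪w, y⟫` and
`∇u(x) = v + s w` with `s = f'(⟪w, x⟫) ∈ (-1, 1)`. The line `r ↦ v + r w`, `r ∈ [-1, 1]`, is
the segment `[a, b]`, on which `H` is constant, so differentiating along it at the interior
point `r = s` gives `⟪∇H(∇u(x)), w⟫ = 0`. For `p ⊥ w` the directional derivative
`Du(y) p = ⟪v, p⟫` does not depend on `y`, hence `D²u(x)(p, p) = 0`.
-/

open scoped RealInnerProductSpace Topology

section

variable {𝕜 E F : Type*} [NontriviallyNormedField 𝕜] [NormedAddCommGroup E] [NormedSpace 𝕜 E]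
  [NormedAddCommGroup F] [NormedSpace 𝕜 F]

theorem fderiv_fderiv_apply_eq_zero_of_fderiv_apply_const {u : E → F} {x p : E} {c : F}
    (hu : DifferentiableAt 𝕜 (fderiv 𝕜 u) x) (hconst : ∀ y, fderiv 𝕜 u y p = c) (q : E) :
    fderiv 𝕜 (fderiv 𝕜 u) x q p = 0 := by
  have hderiv : HasFDerivAt (fun y => fderiv 𝕜 u y p)
      ((ContinuousLinearMap.apply 𝕜 F p).comp (fderiv 𝕜 (fderiv 𝕜 u) x)) x :=
    (ContinuousLinearMap.apply 𝕜 F p).hasFDerivAt.comp x hu.hasFDerivAt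
  have hzero : HasFDerivAt (fun y => fderiv 𝕜 u y p) (0 : E →L[𝕜] F) x := by
    simp only [hconst]
    exact hasFDerivAt_const c x
  simpa using congrArg (fun L : E →L[𝕜] F => L q) (hderiv.unique hzero)

end

section

variable {E : Type*} [NormedAddCommGroup E] [InnerProductSpace ℝ E]

theorem fderiv_apply_eq_zero_of_eventually_const_on_line {H : E → ℝ} {v w : E} {s c : ℝ}
    (hH : DifferentiableAt ℝ H (v + s • w)) (hconst : ∀ᶠ r in 𝓝 s, H (v + r • w) = c) :
    fderiv ℝ H (v + s • w) w = 0 := by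
  have hline : HasDerivAt (fun r : ℝ => v + r • w) w s := by
    simpa using ((hasDerivAt_id s).smul_const w).const_add v
  exact (hH.hasFDerivAt.comp_hasDerivAt s hline).unique
    ((hasDerivAt_const s c).congr_of_eventuallyEq hconst)

theorem inner_gradient_eq_zero_of_eventually_const_on_line [CompleteSpace E] {H : E → ℝ}
    {v w : E} {s c : ℝ} (hH : DifferentiableAt ℝ H (v + s • w))
    (hconst : ∀ᶠ r in 𝓝 s, H (v + r • w) = c) :
    ⟪gradient H (v + s • w), w⟫ = 0 := by
  rw [gradient, InnerProductSpace.toDual_symm_apply]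
  exact fderiv_apply_eq_zero_of_eventually_const_on_line hH hconst

def ridge (v w : E) (f : ℝ → ℝ) (y : E) : ℝ := ⟪v, y⟫ + f ⟪w, y⟫

variable {f : ℝ → ℝ} (v w : E)

theorem contDiff_ridge {k : WithTop ℕ∞} (hf : ContDiff ℝ k f) : ContDiff ℝ k (ridge v w f) :=
  (innerSL ℝ v).contDiff.add (hf.comp (innerSL ℝ w).contDiff)

theorem hasFDerivAt_ridge (hf : Differentiable ℝ f) (y : E) :
    HasFDerivAt (ridge v w f) (innerSL ℝ v + deriv f ⟪w, y⟫ • innerSL ℝ w) y :=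
  (innerSL ℝ v).hasFDerivAt.add ((hf _).hasDerivAt.comp_hasFDerivAt y (innerSL ℝ w).hasFDerivAt)

theorem gradient_ridge [CompleteSpace E] (hf : Differentiable ℝ f) (x : E) :
    gradient (ridge v w f) x = v + deriv f ⟪w, x⟫ • w := by
  refine HasGradientAt.gradient (hasGradientAt_iff_hasFDerivAt.mpr ?_)
  refine (hasFDerivAt_ridge v w hf x).congr_fderiv ?_
  ext y
  simp

theorem fderiv_ridge_apply_of_inner_eq_zero (hf : Differentiable ℝ f) {p : E}
    (hwp : ⟪w, p⟫ = 0) (y : E) : fderiv ℝ (ridge v w f) y p = ⟪v, p⟫ := by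
  simp [(hasFDerivAt_ridge v w hf y).fderiv, hwp]

end

theorem stmt_6_general (n : ℕ) (H : EuclideanSpace ℝ (Fin n) → ℝ)
    (hH : ContDiff ℝ 1 H) (a b : EuclideanSpace ℝ (Fin n)) (c : ℝ)
    (hconst : ∀ t : ℝ, t ∈ Set.Icc (0:ℝ) 1 → H (t • a + (1 - t) • b) = c)
    (f : ℝ → ℝ) (hf : ContDiff ℝ 2 f)
    (M : ℝ) (hM : M < 1) (hf' : ∀ t : ℝ, |deriv f t| ≤ M)
    (u : EuclideanSpace ℝ (Fin n) → ℝ)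
    (hu : ∀ x, u x = ⟪(2:ℝ)⁻¹ • (b + a), x⟫ + f ⟪(2:ℝ)⁻¹ • (b - a), x⟫) :
    ContDiff ℝ 2 u ∧
      ∀ x, iteratedFDeriv ℝ 2 u x
        ![gradient H (gradient u x), gradient H (gradient u x)] = 0 := by
  set v : EuclideanSpace ℝ (Fin n) := (2:ℝ)⁻¹ • (b + a)
  set w : EuclideanSpace ℝ (Fin n) := (2:ℝ)⁻¹ • (b - a)
  obtain rfl : u = ridge v w f := funext hu
  have hf1 : Differentiable ℝ f := hf.differentiable two_ne_zero
  refine ⟨contDiff_ridge v w hf, fun x => ?_⟩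
  set s := deriv f ⟪w, x⟫
  have hs : s ∈ Set.Ioo (-1 : ℝ) 1 := abs_lt.mp ((hf' _).trans_lt hM)
  have hH_line : ∀ᶠ r in 𝓝 s, H (v + r • w) = c := by
    filter_upwards [Ioo_mem_nhds hs.1 hs.2] with r hr
    convert hconst ((1 - r) / 2) ⟨by linarith [hr.2], by linarith [hr.1]⟩ using 2
    module
  have horth : ⟪w, gradient H (v + s • w)⟫ = 0 := by
    rw [real_inner_comm]
    exact inner_gradient_eq_zero_of_eventually_const_on_line
      (hH.differentiable one_ne_zero _) hH_line
  have hD2 : DifferentiableAt ℝ (fderiv ℝ (ridge v w f)) x :=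
    ((contDiff_ridge v w hf).fderiv_right le_rfl).differentiable one_ne_zero x
  rw [iteratedFDeriv_two_apply, gradient_ridge v w hf1]
  exact fderiv_fderiv_apply_eq_zero_of_fderiv_apply_const hD2
    (fderiv_ridge_apply_of_inner_eq_zero v w hf1 horth) _

theorem stmt_6 (n : ℕ) (hn : 2 ≤ n) (H : EuclideanSpace ℝ (Fin n) → ℝ)
    (hH : ContDiff ℝ 1 H) (a b : EuclideanSpace ℝ (Fin n)) (c : ℝ)
    (hconst : ∀ t : ℝ, t ∈ Set.Icc (0:ℝ) 1 → H (t • a + (1 - t) • b) = c)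
    (f : ℝ → ℝ) (hf : ContDiff ℝ 2 f)
    (M : ℝ) (hM : M < 1) (hf' : ∀ t : ℝ, |deriv f t| ≤ M)
    (u : EuclideanSpace ℝ (Fin n) → ℝ)
    (hu : ∀ x, u x = ⟪(2:ℝ)⁻¹ • (b + a), x⟫ + f ⟪(2:ℝ)⁻¹ • (b - a), x⟫) :
    ContDiff ℝ 2 u ∧
      ∀ x, iteratedFDeriv ℝ 2 u x
        ![gradient H (gradient u x), gradient H (gradient u x)] = 0 :=
  stmt_6_general n H hH a b c hconst f hf M hM hf' u hu
end
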